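/- arXiv:1709.00442 — 5 statements merged into one kernel-verified Lean document; each statement's English description precedes it below -/
import Mathlib

section
/- The lattice supersymmetry operators are nilpotent: for every N ≥ 3, Q^(N−1) ∘ Q^(N) = 0 as a map V^⊗N → V^⊗(N−2), and for every N ≥ 2, Q^(N+1)† ∘ Q^(N)† = 0 as a map V^⊗(N−1) → V^⊗(N+1). -/
noncomputable section
open Complex Matrix

/-- Spin configurations of a chain of `N` sites: `true` encodes `v₊`, `false` encodes `v₋`.
The site with label `i ∈ {1,…,N}` corresponds to the index `i-1 : Fin N`
(so the leftmost site `N` is the index `N-1`). -/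
abbrev Conf (N : ℕ) := Fin N → Bool

/-- The combinatorial-point parameter `η = 2πi/3`. -/
def ηc : ℂ := 2 * (Real.pi : ℂ) * Complex.I / 3

/-- `a(u) = sinh(u+η)/sinh η`. -/
def aF (u : ℂ) : ℂ := Complex.sinh (u + ηc) / Complex.sinh ηc
/-- `b(u) = sinh(u)/sinh η`. -/
def bF (u : ℂ) : ℂ := Complex.sinh u / Complex.sinh ηc
/-- `c(u) = 1`. -/
def cF (_ : ℂ) : ℂ := 1
/-- `d(u) = sinh(u-η)/sinh η`. -/
def dF (u : ℂ) : ℂ := Complex.sinh (u - ηc) / Complex.sinh ηc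
/-- The local SUSY generator `q_{i,i+1}` (with `i = k+1`) on a chain of `n+2` sites:
it applies `q : V⊗V → V`, `q(v₊⊗v₊) = v₋` (zero on the other basis vectors), to the
adjacent sites `i, i+1` (merging them into the single site `i` of the output chain of
`n+1` sites) and the identity to all other sites. -/
def qMerge (n : ℕ) (k : Fin (n + 1)) : Matrix (Conf (n + 1)) (Conf (n + 2)) ℂ :=
  Matrix.of fun o i =>
    if i (Fin.castSucc k) = true ∧ i (Fin.succ k) = true ∧ o k = false ∧
        (∀ j : Fin (n + 1),
          ((j : ℕ) < (k : ℕ) → o j = i (Fin.castSucc j)) ∧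
          ((k : ℕ) < (j : ℕ) → o j = i (Fin.succ j)))
    then 1 else 0

/-- The SUSY operator `Q^(N)` for `N = n+2`:
`Q^(N) = ∑_{i=1}^{N-1} (-1)^{i+1} q_{i,i+1} : V^⊗N → V^⊗(N-1)`. -/
def Qop (n : ℕ) : Matrix (Conf (n + 1)) (Conf (n + 2)) ℂ :=
  ∑ k : Fin (n + 1), ((-1 : ℂ) ^ (k : ℕ)) • qMerge n k

/-- The local operator `q†_i` (with `i = k+1`) on a chain of `n+1` sites: it applies
`q† : V → V⊗V`, `q†(v₋) = v₊⊗v₊`, `q†(v₊) = 0`, to site `i` (splitting it into the two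
adjacent sites `i, i+1` of the output chain of `n+2` sites) and the identity elsewhere. -/
def qSplit (n : ℕ) (k : Fin (n + 1)) : Matrix (Conf (n + 2)) (Conf (n + 1)) ℂ :=
  Matrix.of fun o i =>
    if o (Fin.castSucc k) = true ∧ o (Fin.succ k) = true ∧ i k = false ∧
        (∀ j : Fin (n + 1),
          ((j : ℕ) < (k : ℕ) → i j = o (Fin.castSucc j)) ∧
          ((k : ℕ) < (j : ℕ) → i j = o (Fin.succ j)))
    then 1 else 0

/-- The adjoint SUSY operator `Q^(N)†` for `N = n+2`:
`Q^(N)† = ∑_{i=1}^{N-1} (-1)^{i+1} q†_i : V^⊗(N-1) → V^⊗N`. -/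
def Qdag (n : ℕ) : Matrix (Conf (n + 2)) (Conf (n + 1)) ℂ :=
  ∑ k : Fin (n + 1), ((-1 : ℂ) ^ (k : ℕ)) • qSplit n k

-- appended after base
/-- Safe indexing into a configuration by a natural number. -/
def cget {M : ℕ} (i : Conf M) (j : ℕ) : Bool := if h : j < M then i ⟨j, h⟩ else false

lemma cget_eq {M : ℕ} (i : Conf M) (j : ℕ) (h : j < M) : cget i j = i ⟨j, h⟩ := dif_pos h

/-- Merge at (0-based) position `k`. -/
def mergeC {m : ℕ} (k : ℕ) (i : Conf (m+1)) : Conf m :=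
  fun j => if (j:ℕ) < k then cget i j else if (j:ℕ) = k then false else cget i ((j:ℕ)+1)

lemma mergeC_apply {m : ℕ} (k : ℕ) (i : Conf (m+1)) (j : Fin m) :
    mergeC k i j = if (j:ℕ) < k then cget i j else if (j:ℕ) = k then false else cget i ((j:ℕ)+1) := rfl

lemma cget_mergeC {m : ℕ} (k : ℕ) (i : Conf (m+1)) (j : ℕ) (h : j < m) :
    cget (mergeC k i) j = if j < k then cget i j else if j = k then false else cget i (j+1) := by
  rw [cget_eq _ _ h]; rfl

open Classical in
/-- Matrix of a partially defined function. -/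
def pMat {N M : ℕ} (P : Conf M → Prop) (f : Conf M → Conf N) : Matrix (Conf N) (Conf M) ℂ :=
  Matrix.of fun o i => if P i ∧ o = f i then 1 else 0

lemma pMat_mul {N M K : ℕ} (P : Conf M → Prop) (f : Conf M → Conf N)
    (Q : Conf K → Prop) (g : Conf K → Conf M) :
    pMat P f * pMat Q g = pMat (fun i => Q i ∧ P (g i)) (fun i => f (g i)) := by
  classical
  ext o i
  simp only [Matrix.mul_apply, pMat, Matrix.of_apply]
  rw [Finset.sum_eq_single (g i)]
  · by_cases hQ : Q i
    · by_cases hP : P (g i) <;> by_cases ho : o = f (g i) <;> simp [hQ, hP, ho]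
    · simp [hQ]
  · intro m _ hm; simp [hm]
  · simp
lemma ite_one_zero_congr {P Q : Prop} {dp : Decidable P} {dq : Decidable Q} (h : P ↔ Q) :
    (@ite ℂ P dp 1 0) = @ite ℂ Q dq 1 0 := by
  rcases dq with hq | hq
  · rw [if_neg hq, if_neg (fun hp => hq (h.mp hp))]
  · rw [if_pos hq, if_pos (h.mpr hq)]
lemma qMerge_eq (n : ℕ) (k : Fin (n+1)) :
    qMerge n k = pMat (fun i => cget i (k:ℕ) = true ∧ cget i ((k:ℕ)+1) = true) (mergeC (k:ℕ)) := by
  ext o i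
  simp only [qMerge, pMat, Matrix.of_apply]
  have e1 : cget i ((k:ℕ)) = i (Fin.castSucc k) := by
    rw [cget_eq i (k:ℕ) (Nat.lt_succ_of_lt k.isLt)]
    exact congrArg i (Fin.ext (by simp))
  have e2 : cget i ((k:ℕ)+1) = i (Fin.succ k) := by
    rw [cget_eq i ((k:ℕ)+1) (Nat.succ_lt_succ k.isLt)]
    exact congrArg i (Fin.ext (by simp))
  refine ite_one_zero_congr ?_
  constructor
  · rintro ⟨h1, h2, h3, h4⟩
    refine ⟨⟨by rw [e1]; exact h1, by rw [e2]; exact h2⟩, ?_⟩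
    funext j
    rw [mergeC_apply]
    rcases lt_trichotomy ((j:ℕ)) ((k:ℕ)) with h | h | h
    · rw [if_pos h, (h4 j).1 h, cget_eq i (j:ℕ) (Nat.lt_succ_of_lt j.isLt)]
      exact congrArg i (Fin.ext (by simp))
    · rw [if_neg (by omega), if_pos h]
      have : j = k := Fin.ext h
      rw [this]; exact h3
    · rw [if_neg (by omega), if_neg (by omega), (h4 j).2 h,
        cget_eq i ((j:ℕ)+1) (Nat.succ_lt_succ j.isLt)]
      exact congrArg i (Fin.ext (by simp))
  · rintro ⟨⟨h1, h2⟩, h3⟩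
    subst h3
    refine ⟨by rw [← e1]; exact h1, by rw [← e2]; exact h2, ?_, fun j => ⟨?_, ?_⟩⟩
    · rw [mergeC_apply, if_neg (lt_irrefl _), if_pos rfl]
    · intro hj
      rw [mergeC_apply, if_pos hj, cget_eq i (j:ℕ) (Nat.lt_succ_of_lt j.isLt)]
      exact congrArg i (Fin.ext (by simp))
    · intro hj
      rw [mergeC_apply, if_neg (by omega), if_neg (by omega),
        cget_eq i ((j:ℕ)+1) (Nat.succ_lt_succ j.isLt)]
      exact congrArg i (Fin.ext (by simp))

lemma merge_merge {m : ℕ} (a b : ℕ) (hba : b < a) (i : Conf (m+2)) :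
    mergeC a (mergeC b i) = mergeC b (mergeC (a+1) i) := by
  funext j
  have hj := j.isLt
  rw [mergeC_apply, mergeC_apply,
    cget_mergeC b i (j:ℕ) (by omega), cget_mergeC b i ((j:ℕ)+1) (by omega),
    cget_mergeC (a+1) i (j:ℕ) (by omega), cget_mergeC (a+1) i ((j:ℕ)+1) (by omega)]
  split_ifs <;> first | rfl | omega | (congr 1; omega)
/-- The composite term `q_{a} ∘ q_{b}` (second merge at `a`, first at `b`). -/
def T (n a b : ℕ) : Matrix (Conf (n+1)) (Conf (n+3)) ℂ :=
  pMat (fun i => (cget i b = true ∧ cget i (b+1) = true) ∧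
      (cget (mergeC b i) a = true ∧ cget (mergeC b i) (a+1) = true))
    (fun i => mergeC a (mergeC b i))

lemma T_swap (n a b : ℕ) (hba : b < a) (ha : a ≤ n) : T n a b = T n b (a+1) := by
  ext o i
  simp only [T, pMat, Matrix.of_apply]
  refine ite_one_zero_congr (and_congr ?_ (by rw [merge_merge a b hba]))
  rw [cget_mergeC b i a (by omega), cget_mergeC b i (a+1) (by omega),
    cget_mergeC (a+1) i b (by omega), cget_mergeC (a+1) i (b+1) (by omega),
    if_neg (by omega), if_neg (by omega), if_neg (by omega), if_neg (by omega),
    if_pos (by omega), if_pos (by omega)]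
  tauto

lemma T_degenerate (n a b : ℕ) (ha : a ≤ n) (hb : b = a ∨ b = a + 1) : T n a b = 0 := by
  ext o i
  simp only [T, pMat, Matrix.of_apply, Matrix.zero_apply]
  rw [if_neg]
  rintro ⟨⟨-, h, h'⟩, -⟩
  rcases hb with rfl | rfl
  · rw [cget_mergeC b i b (by omega), if_neg (by omega), if_pos rfl] at h
    exact Bool.false_ne_true h
  · rw [cget_mergeC (a+1) i (a+1) (by omega), if_neg (by omega), if_pos rfl] at h'
    exact Bool.false_ne_true h'
def fdef (n : ℕ) (p : Fin (n+1) × Fin (n+2)) : Matrix (Conf (n+1)) (Conf (n+3)) ℂ :=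
  ((-1 : ℂ) ^ ((p.1 : ℕ) + (p.2 : ℕ))) • T n (p.1 : ℕ) (p.2 : ℕ)

def gfun (n : ℕ) (p : Fin (n+1) × Fin (n+2)) : Fin (n+1) × Fin (n+2) :=
  if h : (p.2 : ℕ) < (p.1 : ℕ) then
    (⟨(p.2 : ℕ), by have := p.1.isLt; omega⟩, ⟨(p.1 : ℕ) + 1, by have := p.1.isLt; omega⟩)
  else if h2 : (p.1 : ℕ) + 2 ≤ (p.2 : ℕ) then
    (⟨(p.2 : ℕ) - 1, by have := p.2.isLt; omega⟩, ⟨(p.1 : ℕ), by have := p.1.isLt; omega⟩)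
  else p

lemma sign_cancel (x y : ℕ) (h : x = y + 1 ∨ y = x + 1) : ((-1 : ℂ) ^ x + (-1 : ℂ) ^ y) = 0 := by
  rcases h with h | h <;> rw [h, pow_succ] <;> ring

lemma key_sum (n : ℕ) : ∑ p : Fin (n+1) × Fin (n+2), fdef n p = 0 := by
  apply Finset.sum_involution (fun p _ => gfun n p)
  · intro p _
    rcases Nat.lt_trichotomy (p.2 : ℕ) (p.1 : ℕ) with h | h | h
    · rw [show gfun n p = (⟨(p.2:ℕ), by have := p.1.isLt; omega⟩,
          ⟨(p.1:ℕ)+1, by have := p.1.isLt; omega⟩) from dif_pos h]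
      simp only [fdef]
      rw [T_swap n (p.1:ℕ) (p.2:ℕ) h (by have := p.1.isLt; omega), ← add_smul,
        sign_cancel _ _ (by omega), zero_smul]
    · by_cases h2 : (p.1 : ℕ) + 2 ≤ (p.2 : ℕ)
      · omega
      · rw [show gfun n p = p from by rw [gfun, dif_neg (by omega), dif_neg h2]]
        have hz : T n (p.1:ℕ) (p.2:ℕ) = 0 :=
          T_degenerate n _ _ (by have := p.1.isLt; omega) (Or.inl h)
        simp [fdef, hz]
    · by_cases h2 : (p.1 : ℕ) + 2 ≤ (p.2 : ℕ)
      · rw [show gfun n p = (⟨(p.2:ℕ)-1, by have := p.2.isLt; omega⟩,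
            ⟨(p.1:ℕ), by have := p.1.isLt; omega⟩) from by
            rw [gfun, dif_neg (by omega), dif_pos h2]]
        simp only [fdef]
        have hs : T n ((p.2:ℕ)-1) (p.1:ℕ) = T n (p.1:ℕ) (p.2:ℕ) := by
          rw [T_swap n ((p.2:ℕ)-1) (p.1:ℕ) (by omega) (by have := p.2.isLt; omega)]
          have e : (p.2:ℕ) - 1 + 1 = (p.2:ℕ) := by omega
          rw [e]
        rw [hs, ← add_smul, sign_cancel _ _ (by omega), zero_smul]
      · have hl : (p.2 : ℕ) = (p.1 : ℕ) + 1 := by omega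
        rw [show gfun n p = p from by rw [gfun, dif_neg (by omega), dif_neg h2]]
        have hz : T n (p.1:ℕ) (p.2:ℕ) = 0 :=
          T_degenerate n _ _ (by have := p.1.isLt; omega) (Or.inr hl)
        simp [fdef, hz]
  · intro p _ hne
    rcases Nat.lt_trichotomy (p.2 : ℕ) (p.1 : ℕ) with h | h | h
    · rw [show gfun n p = (⟨(p.2:ℕ), by have := p.1.isLt; omega⟩,
          ⟨(p.1:ℕ)+1, by have := p.1.isLt; omega⟩) from dif_pos h]
      intro he
      have := congrArg (fun q => (q.1 : ℕ)) he
      simp at this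
      omega
    · by_cases h2 : (p.1 : ℕ) + 2 ≤ (p.2 : ℕ)
      · omega
      · exfalso
        apply hne
        have hz : T n (p.1:ℕ) (p.2:ℕ) = 0 :=
          T_degenerate n _ _ (by have := p.1.isLt; omega) (Or.inl h)
        simp [fdef, hz]
    · by_cases h2 : (p.1 : ℕ) + 2 ≤ (p.2 : ℕ)
      · rw [show gfun n p = (⟨(p.2:ℕ)-1, by have := p.2.isLt; omega⟩,
            ⟨(p.1:ℕ), by have := p.1.isLt; omega⟩) from by
            rw [gfun, dif_neg (by omega), dif_pos h2]]
        intro he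
        have := congrArg (fun q => (q.2 : ℕ)) he
        simp at this
        omega
      · exfalso
        apply hne
        have hz : T n (p.1:ℕ) (p.2:ℕ) = 0 :=
          T_degenerate n _ _ (by have := p.1.isLt; omega) (Or.inr (by omega))
        simp [fdef, hz]
  · intro p _; exact Finset.mem_univ _
  · intro p _
    rcases Nat.lt_trichotomy (p.2 : ℕ) (p.1 : ℕ) with h | h | h
    · have e1 : gfun n p = (⟨(p.2:ℕ), by have := p.1.isLt; omega⟩,
          ⟨(p.1:ℕ)+1, by have := p.1.isLt; omega⟩) := dif_pos h
      rw [e1, gfun, dif_neg (by simp; omega), dif_pos (by simp; omega)]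
      refine Prod.ext (Fin.ext ?_) (Fin.ext ?_) <;> simp <;> omega
    · by_cases h2 : (p.1 : ℕ) + 2 ≤ (p.2 : ℕ)
      · omega
      · have e1 : gfun n p = p := by rw [gfun, dif_neg (by omega), dif_neg h2]
        rw [e1, e1]
    · by_cases h2 : (p.1 : ℕ) + 2 ≤ (p.2 : ℕ)
      · have e1 : gfun n p = (⟨(p.2:ℕ)-1, by have := p.2.isLt; omega⟩,
            ⟨(p.1:ℕ), by have := p.1.isLt; omega⟩) := by
          rw [gfun, dif_neg (by omega), dif_pos h2]
        rw [e1, gfun, dif_pos (by simp; omega)]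
        refine Prod.ext (Fin.ext ?_) (Fin.ext ?_) <;> simp <;> omega
      · have e1 : gfun n p = p := by rw [gfun, dif_neg (by omega), dif_neg h2]
        rw [e1, e1]
lemma Qop_mul_Qop (n : ℕ) : Qop n * Qop (n + 1) = 0 := by
  have expand : Qop n * Qop (n + 1) = ∑ p : Fin (n+1) × Fin (n+2), fdef n p := by
    unfold Qop
    simp_rw [qMerge_eq]
    rw [Matrix.sum_mul]
    simp_rw [Matrix.mul_sum, Matrix.smul_mul, Matrix.mul_smul, smul_smul, pMat_mul]
    rw [Fintype.sum_prod_type]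
    refine Finset.sum_congr rfl fun k _ => Finset.sum_congr rfl fun l _ => ?_
    simp only [fdef, T, pow_add]
  rw [expand, key_sum]

lemma qSplit_transpose (n : ℕ) (k : Fin (n+1)) : qSplit n k = (qMerge n k)ᵀ := rfl

lemma Qdag_transpose (n : ℕ) : Qdag n = (Qop n)ᵀ := by
  unfold Qdag Qop
  rw [Matrix.transpose_sum]
  refine Finset.sum_congr rfl fun k _ => ?_
  rw [Matrix.transpose_smul, qSplit_transpose]

theorem Q_nilpotent_aux :
    (∀ n : ℕ, Qop n * Qop (n + 1) = 0) ∧ (∀ n : ℕ, Qdag (n + 1) * Qdag n = 0) := by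
  refine ⟨Qop_mul_Qop, fun n => ?_⟩
  rw [Qdag_transpose, Qdag_transpose, ← Matrix.transpose_mul, Qop_mul_Qop,
    Matrix.transpose_zero]

/-- nilpotency of the lattice SUSY operators.  Here `Qop n = Q^(n+2)` and
`Qdag n = Q^(n+2)†`, so the first clause is `Q^(N-1) ∘ Q^(N) = 0` for every `N = n+3 ≥ 3`
and the second clause is `Q^(N+1)† ∘ Q^(N)† = 0` for every `N = n+2 ≥ 2`. -/
theorem Q_nilpotent :
    (∀ n : ℕ, Qop n * Qop (n + 1) = 0) ∧ (∀ n : ℕ, Qdag (n + 1) * Qdag n = 0) := by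
  exact Q_nilpotent_aux
end
end

section
/- (Theorem 1, 𝒜-relation) For every N ≥ 2 and every u ∈ ℂ: Q^(N) ∘ 𝒜^(N)(u) − d(u)² · 𝒜^(N−1)(u) ∘ Q^(N) = (−1)^N c(u) d(u) · (E⁺ ⊗ ℬ^(N−1)(u)) as linear maps V^⊗N → V^⊗(N−1). -/
noncomputable section
open Complex Matrix

/-- The R-matrix `R(u)` on `V⊗V` in the ordered basis `(v₊⊗v₊, v₊⊗v₋, v₋⊗v₊, v₋⊗v₋)`:
`[[a,0,0,0],[0,b,c,0],[0,c,b,0],[0,0,0,a]]`. -/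
def Rm (u : ℂ) : Matrix (Bool × Bool) (Bool × Bool) ℂ :=
  Matrix.of fun o i =>
    if o = i then (if o.1 = o.2 then aF u else bF u)
    else if o.1 = i.2 ∧ o.2 = i.1 ∧ o.1 ≠ o.2 then cF u
    else 0

/-- The boundary K-matrix `K⁻(u) = diag(d(u), -a(u))` in the basis `(v₊, v₋)`. -/
def Km (u : ℂ) : Matrix Bool Bool ℂ :=
  Matrix.of fun o i => if o = i then (if o then dF u else -aF u) else 0

/-- `R₀ᵢ(u)`: the matrix `R(u)` applied to `V₀ ⊗ Vᵢ` (auxiliary space first), identity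
elsewhere, on `V₀ ⊗ V^⊗N`; here the site with label `i` is the index `i-1`. -/
def R0i (N : ℕ) (u : ℂ) (i : Fin N) :
    Matrix (Bool × Conf N) (Bool × Conf N) ℂ :=
  Matrix.of fun x y =>
    if ∀ j, j ≠ i → x.2 j = y.2 j then Rm u (x.1, x.2 i) (y.1, y.2 i) else 0

/-- `Rᵢ₀(u)`: the matrix `R(u)` applied to `Vᵢ ⊗ V₀` (auxiliary space second), identity
elsewhere, on `V₀ ⊗ V^⊗N`. -/
def Ri0 (N : ℕ) (u : ℂ) (i : Fin N) :
    Matrix (Bool × Conf N) (Bool × Conf N) ℂ :=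
  Matrix.of fun x y =>
    if ∀ j, j ≠ i → x.2 j = y.2 j then Rm u (x.2 i, x.1) (y.2 i, y.1) else 0

/-- `T^(N)(u) = R₀₁(u) R₀₂(u) ⋯ R₀N(u)`. -/
def Tmono (N : ℕ) (u : ℂ) : Matrix (Bool × Conf N) (Bool × Conf N) ℂ :=
  (List.ofFn fun i : Fin N => R0i N u i).prod

/-- `T̄^(N)(u) = R_{N0}(u) ⋯ R_{20}(u) R_{10}(u)`. -/
def Tbar (N : ℕ) (u : ℂ) : Matrix (Bool × Conf N) (Bool × Conf N) ℂ :=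
  (List.ofFn fun i : Fin N => Ri0 N u i).reverse.prod

/-- `K₀⁻(u)`: the matrix `K⁻(u)` acting on the auxiliary space `V₀`, identity on `V^⊗N`. -/
def K0m (N : ℕ) (u : ℂ) : Matrix (Bool × Conf N) (Bool × Conf N) ℂ :=
  Matrix.of fun x y => if x.2 = y.2 then Km u x.1 y.1 else 0

/-- The double-row monodromy matrix `U^(N)(u) = T̄^(N)(u) K₀⁻(u) T^(N)(u)`. -/
def Umono (N : ℕ) (u : ℂ) : Matrix (Bool × Conf N) (Bool × Conf N) ℂ :=
  Tbar N u * K0m N u * Tmono N u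

/-- `𝒜^(N)(u)`: the `(v₊, v₊)` auxiliary-space block of `U^(N)(u)`. -/
def Aop (N : ℕ) (u : ℂ) : Matrix (Conf N) (Conf N) ℂ :=
  Matrix.of fun s t => Umono N u (true, s) (true, t)
/-- `ℬ^(N)(u)`: the `(v₊, v₋)` auxiliary-space block of `U^(N)(u)`. -/
def Bop (N : ℕ) (u : ℂ) : Matrix (Conf N) (Conf N) ℂ :=
  Matrix.of fun s t => Umono N u (true, s) (false, t)
/-- `𝒞^(N)(u)`: the `(v₋, v₊)` auxiliary-space block of `U^(N)(u)`. -/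
def Cop (N : ℕ) (u : ℂ) : Matrix (Conf N) (Conf N) ℂ :=
  Matrix.of fun s t => Umono N u (false, s) (true, t)
/-- `𝒟^(N)(u)`: the `(v₋, v₋)` auxiliary-space block of `U^(N)(u)`. -/
def Dop (N : ℕ) (u : ℂ) : Matrix (Conf N) (Conf N) ℂ :=
  Matrix.of fun s t => Umono N u (false, s) (false, t)

/-- The transfer matrix
`t^(N)(u) = (sinh u / sinh η) 𝒜^(N)(u) - (sinh(u+2η)/sinh η) 𝒟^(N)(u)`. -/
def tOp (N : ℕ) (u : ℂ) : Matrix (Conf N) (Conf N) ℂ :=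
  (Complex.sinh u / Complex.sinh ηc) • Aop N u
    - (Complex.sinh (u + 2 * ηc) / Complex.sinh ηc) • Dop N u

/-- The pseudovacuum `Ω^(N) = v₊ ⊗ ⋯ ⊗ v₊`. -/
def Omega (N : ℕ) : Conf N → ℂ := fun s => if ∀ j, s j = true then 1 else 0

/-- `E^ε ⊗ X : V^⊗(n+2) → V^⊗(n+1)`: the linear functional `E^ε : V → ℂ`, `v_ε ↦ 1`
(zero on the other basis vector), applied to the leftmost site `N = n+2`, tensored with
the operator `X` on the remaining sites `n+1,…,1`.  Here `e = true` encodes `ε = +`. -/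
def Etens (n : ℕ) (e : Bool) (X : Matrix (Conf (n + 1)) (Conf (n + 1)) ℂ) :
    Matrix (Conf (n + 1)) (Conf (n + 2)) ℂ :=
  Matrix.of fun o i =>
    (if i (Fin.last (n + 1)) = e then 1 else 0) * X o (fun j => i (Fin.castSucc j))

/-- `F ⊗ X` : the one-site operator `F` applied to the leftmost site `N+1` of a chain of
`N+1` sites, tensored with the operator `X` on the remaining sites `N,…,1`. -/
def siteTens (N : ℕ) (F : Matrix Bool Bool ℂ) (X : Matrix (Conf N) (Conf N) ℂ) :
    Matrix (Conf (N + 1)) (Conf (N + 1)) ℂ :=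
  Matrix.of fun o i =>
    F (o (Fin.last N)) (i (Fin.last N)) * X (fun j => o (Fin.castSucc j)) (fun j => i (Fin.castSucc j))

/-- `E^ε_{ε'} : V → V` sends `v_ε ↦ v_{ε'}` and the other basis vector to `0`
(`true` encodes `+`). -/
def Eop (e e' : Bool) : Matrix Bool Bool ℂ :=
  Matrix.of fun o i => if i = e ∧ o = e' then 1 else 0
/-!
Adding a site on the left acts on the double-row monodromy matrix by
`U^(K+1) = R₀,K+1 (1 ⊗ U^(K)) R₀,K+1` (as `Rᵢ₀ = R₀ᵢ`), so each block `𝒳^(K+1)`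
(`𝒳 = 𝒜, ℬ, 𝒞, 𝒟`) is a sum of terms `F ⊗ 𝒴^(K)` with one-site operators `F` built from the
entries of `R(u)`; similarly `Q^(m+1) = 1 ⊗ Q^(m) ± E⁺ ⊗ E⁺₋ ⊗ 1`. The four relations
`Q 𝒳^(m+1) = d² 𝒳^(m) Q + (boundary term)` are therefore proved together by induction on the
number of sites, starting from the one-site chain where `Q = 0`. In the induction step the
coefficients of both sides agree modulo `d = -a - b` and `a² + ab + b² = 1`, the two identities
that hold at `η = 2πi/3`.
-/

namespace XXZ

/-- `E^ε : V → ℂ` as a row vector. -/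
def bra (e : Bool) : Bool → ℂ := fun b => if b = e then 1 else 0

/-- `F ⊗ X` with `F` acting on the leftmost site, for `X : V^⊗m' → V^⊗m`. -/
def leftTensor {m m' : ℕ} (F : Matrix Bool Bool ℂ) (X : Matrix (Conf m) (Conf m') ℂ) :
    Matrix (Conf (m + 1)) (Conf (m' + 1)) ℂ :=
  Matrix.of fun o i =>
    F (o (Fin.last m)) (i (Fin.last m')) * X (fun j => o j.castSucc) (fun j => i j.castSucc)

/-- `v ⊗ X` with the functional `v` applied to the leftmost input site. -/
def leftContract {m m' : ℕ} (v : Bool → ℂ) (X : Matrix (Conf m) (Conf m') ℂ) :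
    Matrix (Conf m) (Conf (m' + 1)) ℂ :=
  Matrix.of fun o i => v (i (Fin.last m')) * X o (fun j => i j.castSucc)

lemma sum_conf_succ {M : Type*} [AddCommMonoid M] {k : ℕ} (f : Conf (k + 1) → M) :
    ∑ s : Conf (k + 1), f s = ∑ t : Conf k, ∑ b : Bool, f (Fin.snoc t b) := by
  rw [← Fintype.sum_equiv (Fin.snocEquiv fun _ ↦ Bool) (fun p ↦ f (Fin.snoc p.2 p.1)) f
    fun _ ↦ rfl, Fintype.sum_prod_type, Finset.sum_comm]

section TensorCalculus

variable {k l m m' : ℕ}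

lemma leftTensor_mul_leftTensor (F G : Matrix Bool Bool ℂ) (X : Matrix (Conf m) (Conf k) ℂ)
    (Y : Matrix (Conf k) (Conf l) ℂ) :
    leftTensor F X * leftTensor G Y = leftTensor (F * G) (X * Y) := by
  ext o i
  simp only [leftTensor, Matrix.mul_apply, Matrix.of_apply, sum_conf_succ, Fin.snoc_last,
    Fin.snoc_castSucc]
  rw [Finset.sum_comm, Finset.sum_mul_sum]
  exact Finset.sum_congr rfl fun _ _ ↦ Finset.sum_congr rfl fun _ _ ↦ by ring

lemma mul_leftContract (P : Matrix (Conf m) (Conf k) ℂ) (v : Bool → ℂ)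
    (Z : Matrix (Conf k) (Conf l) ℂ) :
    P * leftContract v Z = leftContract v (P * Z) := by
  ext o i
  simp only [leftContract, Matrix.mul_apply, Matrix.of_apply, Finset.mul_sum]
  exact Finset.sum_congr rfl fun _ _ ↦ by ring

lemma leftContract_mul_leftTensor (v : Bool → ℂ) (Z : Matrix (Conf m) (Conf k) ℂ)
    (G : Matrix Bool Bool ℂ) (Y : Matrix (Conf k) (Conf l) ℂ) :
    leftContract v Z * leftTensor G Y = leftContract (Matrix.vecMul v G) (Z * Y) := by
  ext o i
  simp only [leftContract, leftTensor, Matrix.mul_apply, Matrix.of_apply, Matrix.vecMul,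
    dotProduct, sum_conf_succ, Fin.snoc_last, Fin.snoc_castSucc]
  rw [Finset.sum_comm, Finset.sum_mul_sum]
  exact Finset.sum_congr rfl fun _ _ ↦ Finset.sum_congr rfl fun _ _ ↦ by ring

lemma leftTensor_leftContract (e e' f : Bool) (Y : Matrix (Conf m) (Conf l) ℂ) :
    leftTensor (Eop e e') (leftContract (bra f) Y) =
      leftContract (bra e) (leftTensor (Eop f e') Y) := by
  ext o i
  simp only [leftTensor, leftContract, Eop, bra, Matrix.of_apply]
  split_ifs <;> simp_all

lemma vecMul_bra_Eop (e f f' : Bool) :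
    Matrix.vecMul (bra e) (Eop f f') = if e = f' then bra f else 0 := by
  funext b
  cases e <;> cases f <;> cases f' <;> cases b <;>
    simp [Matrix.vecMul, dotProduct, Eop, bra]

lemma Eop_mul_Eop (e e' f f' : Bool) :
    Eop e e' * Eop f f' = if e = f' then Eop f e' else 0 := by
  ext x y
  cases e <;> cases e' <;> cases f <;> cases f' <;> cases x <;> cases y <;>
    simp [Eop, Matrix.mul_apply]

@[simp] lemma leftTensor_zero_left (X : Matrix (Conf m) (Conf l) ℂ) : leftTensor 0 X = 0 := by
  ext; simp [leftTensor]

@[simp] lemma leftTensor_zero_right (F : Matrix Bool Bool ℂ) :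
    leftTensor (m := m) (m' := l) F 0 = 0 := by
  ext; simp [leftTensor]

@[simp] lemma leftContract_zero_left (X : Matrix (Conf m) (Conf l) ℂ) :
    leftContract 0 X = 0 := by
  ext; simp [leftContract]

@[simp] lemma leftContract_zero_right (v : Bool → ℂ) :
    leftContract (m := m) (m' := l) v 0 = 0 := by
  ext; simp [leftContract]

lemma leftTensor_add_left (F G : Matrix Bool Bool ℂ) (X : Matrix (Conf m) (Conf l) ℂ) :
    leftTensor (F + G) X = leftTensor F X + leftTensor G X := by
  ext; simp [leftTensor, add_mul]

lemma leftTensor_smul_left (c : ℂ) (F : Matrix Bool Bool ℂ) (X : Matrix (Conf m) (Conf l) ℂ) :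
    leftTensor (c • F) X = c • leftTensor F X := by
  ext; simp [leftTensor, mul_assoc]

lemma leftTensor_add_right (F : Matrix Bool Bool ℂ) (X Y : Matrix (Conf m) (Conf l) ℂ) :
    leftTensor F (X + Y) = leftTensor F X + leftTensor F Y := by
  ext; simp [leftTensor, mul_add]

lemma leftTensor_smul_right (c : ℂ) (F : Matrix Bool Bool ℂ)
    (X : Matrix (Conf m) (Conf l) ℂ) :
    leftTensor F (c • X) = c • leftTensor F X := by
  ext
  simp only [leftTensor, Matrix.smul_apply, smul_eq_mul, Matrix.of_apply]
  ring

lemma leftContract_add_right (v : Bool → ℂ) (X Y : Matrix (Conf m) (Conf l) ℂ) :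
    leftContract v (X + Y) = leftContract v X + leftContract v Y := by
  ext; simp [leftContract, mul_add]

lemma leftContract_smul_right (c : ℂ) (v : Bool → ℂ) (X : Matrix (Conf m) (Conf l) ℂ) :
    leftContract v (c • X) = c • leftContract v X := by
  ext
  simp only [leftContract, Matrix.smul_apply, smul_eq_mul, Matrix.of_apply]
  ring

lemma leftTensor_sum {ι : Type*} (F : Matrix Bool Bool ℂ) (s : Finset ι)
    (X : ι → Matrix (Conf m) (Conf l) ℂ) :
    leftTensor F (∑ i ∈ s, X i) = ∑ i ∈ s, leftTensor F (X i) := by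
  ext
  simp [leftTensor, Matrix.sum_apply, Finset.mul_sum]

end TensorCalculus

/-- `1 ⊗ M`: an operator on `V₀ ⊗ V^⊗K` extended by the identity on a new leftmost site. -/
def extendLeft {K : ℕ} (M : Matrix (Bool × Conf K) (Bool × Conf K) ℂ) :
    Matrix (Bool × Conf (K + 1)) (Bool × Conf (K + 1)) ℂ :=
  Matrix.of fun x y =>
    if x.2 (Fin.last K) = y.2 (Fin.last K) then
      M (x.1, fun j => x.2 j.castSucc) (y.1, fun j => y.2 j.castSucc) else 0

def auxBlock {K : ℕ} (P : Matrix (Bool × Conf K) (Bool × Conf K) ℂ) (e f : Bool) :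
    Matrix (Conf K) (Conf K) ℂ :=
  Matrix.of fun s t => P (e, s) (f, t)

def rBlock (u : ℂ) (e f : Bool) : Matrix Bool Bool ℂ :=
  Matrix.of fun o i => Rm u (e, o) (f, i)

section Monodromy

variable {K : ℕ}

lemma auxBlock_mul (P Q : Matrix (Bool × Conf K) (Bool × Conf K) ℂ) (e f : Bool) :
    auxBlock (P * Q) e f =
      auxBlock P e true * auxBlock Q true f + auxBlock P e false * auxBlock Q false f := by
  ext
  simp only [auxBlock, Matrix.mul_apply, Matrix.of_apply, Matrix.add_apply,
    Fintype.sum_prod_type, Fintype.sum_bool]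

lemma auxBlock_extendLeft (M : Matrix (Bool × Conf K) (Bool × Conf K) ℂ) (e f : Bool) :
    auxBlock (extendLeft M) e f = leftTensor 1 (auxBlock M e f) := by
  ext
  simp only [auxBlock, extendLeft, leftTensor, Matrix.of_apply, Matrix.one_apply]
  split_ifs <;> simp

lemma conf_succ_eq_iff (s t : Conf (K + 1)) :
    s = t ↔ s (Fin.last K) = t (Fin.last K) ∧
      (fun j : Fin K => s j.castSucc) = fun j => t j.castSucc := by
  rw [← Fin.snoc_init_self s, ← Fin.snoc_init_self t]
  simp only [Fin.snoc_last, Fin.snoc_castSucc, Fin.snoc_inj]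
  exact and_comm.trans (and_congr_left' (by simp))

lemma forall_ne_last_iff (s t : Conf (K + 1)) :
    (∀ j, j ≠ Fin.last K → s j = t j) ↔
      (fun j : Fin K => s j.castSucc) = fun j => t j.castSucc := by
  refine ⟨fun h ↦ funext fun j ↦ h _ (Fin.castSucc_lt_last j).ne, fun h j hj ↦ ?_⟩
  obtain ⟨j, rfl⟩ := Fin.exists_castSucc_eq.2 hj
  exact congrFun h j

lemma auxBlock_R0i_last (u : ℂ) (e f : Bool) :
    auxBlock (R0i (K + 1) u (Fin.last K)) e f = leftTensor (rBlock u e f) 1 := by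
  ext s t
  simp only [auxBlock, R0i, leftTensor, rBlock, Matrix.of_apply, Matrix.one_apply,
    forall_ne_last_iff]
  split_ifs <;> simp

lemma extendLeft_one : extendLeft (1 : Matrix (Bool × Conf K) (Bool × Conf K) ℂ) = 1 := by
  ext ⟨e, s⟩ ⟨f, t⟩
  simp only [extendLeft, Matrix.of_apply, Matrix.one_apply, Prod.mk.injEq, conf_succ_eq_iff s t]
  split_ifs <;> simp_all

lemma extendLeft_mul (M M' : Matrix (Bool × Conf K) (Bool × Conf K) ℂ) :
    extendLeft M * extendLeft M' = extendLeft (M * M') := by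
  ext ⟨e, s⟩ ⟨f, t⟩
  simp only [extendLeft, Matrix.mul_apply, Matrix.of_apply, Fintype.sum_prod_type, sum_conf_succ,
    Fin.snoc_last, Fin.snoc_castSucc]
  cases s (Fin.last K) <;> cases t (Fin.last K) <;> simp

lemma list_prod_map_extendLeft (l : List (Matrix (Bool × Conf K) (Bool × Conf K) ℂ)) :
    (l.map extendLeft).prod = extendLeft l.prod := by
  induction l with
  | nil => simp [extendLeft_one]
  | cons a l ih => simp [ih, extendLeft_mul]

lemma Ri0_eq_R0i (N : ℕ) (u : ℂ) (i : Fin N) : Ri0 N u i = R0i N u i := by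
  have Rm_swap (x₁ x₂ y₁ y₂ : Bool) :
      Rm u (x₁, x₂) (y₁, y₂) = Rm u (x₂, x₁) (y₂, y₁) := by
    cases x₁ <;> cases x₂ <;> cases y₁ <;> cases y₂ <;> simp [Rm]
  ext
  simp only [Ri0, R0i, Matrix.of_apply, Rm_swap]

lemma R0i_castSucc (u : ℂ) (i : Fin K) :
    R0i (K + 1) u i.castSucc = extendLeft (R0i K u i) := by
  ext ⟨e, s⟩ ⟨f, t⟩
  have hiff : (∀ j, j ≠ i.castSucc → s j = t j) ↔
      s (Fin.last K) = t (Fin.last K) ∧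
        ∀ j : Fin K, j ≠ i → s j.castSucc = t j.castSucc := by
    rw [Fin.forall_fin_succ']
    simp [(Fin.castSucc_lt_last i).ne', Fin.castSucc_inj, and_comm]
  simp only [R0i, extendLeft, Matrix.of_apply, hiff]
  split_ifs <;> simp_all

lemma Tmono_succ (u : ℂ) :
    Tmono (K + 1) u = extendLeft (Tmono K u) * R0i (K + 1) u (Fin.last K) := by
  simp only [Tmono, List.ofFn_succ', List.concat_eq_append, List.prod_append, List.prod_cons,
    List.prod_nil, mul_one, R0i_castSucc]
  rw [← list_prod_map_extendLeft, List.map_ofFn]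
  rfl

lemma Tbar_succ (u : ℂ) :
    Tbar (K + 1) u = R0i (K + 1) u (Fin.last K) * extendLeft (Tbar K u) := by
  simp only [Tbar, List.ofFn_succ', List.concat_eq_append, List.reverse_append, List.prod_append,
    List.reverse_cons, List.reverse_nil, List.nil_append, List.prod_cons, List.prod_nil, mul_one,
    Ri0_eq_R0i, R0i_castSucc]
  rw [← list_prod_map_extendLeft, List.map_reverse, List.map_ofFn]
  rfl

lemma K0m_succ (u : ℂ) : K0m (K + 1) u = extendLeft (K0m K u) := by
  ext ⟨e, s⟩ ⟨f, t⟩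
  simp only [K0m, extendLeft, Matrix.of_apply, conf_succ_eq_iff s t]
  split_ifs <;> simp_all

lemma Umono_succ (u : ℂ) :
    Umono (K + 1) u =
      R0i (K + 1) u (Fin.last K) * extendLeft (Umono K u) * R0i (K + 1) u (Fin.last K) := by
  simp only [Umono, Tmono_succ, Tbar_succ, K0m_succ, ← extendLeft_mul, Matrix.mul_assoc]

end Monodromy

section BlockRecursion

variable (K : ℕ) (u : ℂ)

lemma auxBlock_Umono_succ (e f : Bool) :
    auxBlock (Umono (K + 1) u) e f =
      leftTensor (rBlock u e true * rBlock u true f) (Aop K u) +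
      leftTensor (rBlock u e true * rBlock u false f) (Bop K u) +
      leftTensor (rBlock u e false * rBlock u true f) (Cop K u) +
      leftTensor (rBlock u e false * rBlock u false f) (Dop K u) := by
  simp only [Umono_succ, auxBlock_mul, auxBlock_R0i_last, auxBlock_extendLeft, Matrix.add_mul,
    leftTensor_mul_leftTensor, Matrix.one_mul, Matrix.mul_one]
  rw [add_add_add_comm, ← add_assoc]
  rfl

lemma rBlock_true_true :
    rBlock u true true = aF u • Eop true true + bF u • Eop false false := by
  ext o i; cases o <;> cases i <;> simp [rBlock, Rm, Eop]

lemma rBlock_false_false :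
    rBlock u false false = bF u • Eop true true + aF u • Eop false false := by
  ext o i; cases o <;> cases i <;> simp [rBlock, Rm, Eop]

lemma rBlock_true_false : rBlock u true false = Eop true false := by
  ext o i; cases o <;> cases i <;> simp [rBlock, Rm, Eop, cF]

lemma rBlock_false_true : rBlock u false true = Eop false true := by
  ext o i; cases o <;> cases i <;> simp [rBlock, Rm, Eop, cF]

lemma Aop_succ :
    Aop (K + 1) u =
      aF u ^ 2 • leftTensor (Eop true true) (Aop K u) +
      bF u ^ 2 • leftTensor (Eop false false) (Aop K u) +
      aF u • leftTensor (Eop false true) (Bop K u) +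
      aF u • leftTensor (Eop true false) (Cop K u) +
      leftTensor (Eop false false) (Dop K u) := by
  rw [show Aop (K + 1) u = auxBlock (Umono (K + 1) u) true true from rfl, auxBlock_Umono_succ]
  simp only [rBlock_true_true, rBlock_true_false, rBlock_false_true,
    Matrix.mul_add, Matrix.add_mul, Algebra.mul_smul_comm, Algebra.smul_mul_assoc, Eop_mul_Eop,
    ↓reduceIte, Bool.false_eq_true, Bool.true_eq_false, smul_zero, add_zero, zero_add, smul_smul,
    leftTensor_add_left, leftTensor_smul_left]
  module

lemma Bop_succ :
    Bop (K + 1) u =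
      bF u • leftTensor (Eop true false) (Aop K u) +
      (aF u * bF u) • leftTensor (Eop true true) (Bop K u) +
      (aF u * bF u) • leftTensor (Eop false false) (Bop K u) +
      bF u • leftTensor (Eop true false) (Dop K u) := by
  rw [show Bop (K + 1) u = auxBlock (Umono (K + 1) u) true false from rfl, auxBlock_Umono_succ]
  simp only [rBlock_true_true, rBlock_false_false, rBlock_true_false,
    Matrix.mul_add, Matrix.add_mul, Algebra.mul_smul_comm, Algebra.smul_mul_assoc, Eop_mul_Eop,
    ↓reduceIte, Bool.false_eq_true, Bool.true_eq_false, smul_zero, add_zero, zero_add, smul_smul,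
    leftTensor_add_left, leftTensor_smul_left, leftTensor_zero_left]
  module

lemma Cop_succ :
    Cop (K + 1) u =
      bF u • leftTensor (Eop false true) (Aop K u) +
      (aF u * bF u) • leftTensor (Eop true true) (Cop K u) +
      (aF u * bF u) • leftTensor (Eop false false) (Cop K u) +
      bF u • leftTensor (Eop false true) (Dop K u) := by
  rw [show Cop (K + 1) u = auxBlock (Umono (K + 1) u) false true from rfl, auxBlock_Umono_succ]
  simp only [rBlock_true_true, rBlock_false_false, rBlock_false_true,
    Matrix.mul_add, Matrix.add_mul, Algebra.mul_smul_comm, Algebra.smul_mul_assoc, Eop_mul_Eop,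
    ↓reduceIte, Bool.false_eq_true, Bool.true_eq_false, smul_zero, add_zero, zero_add, smul_smul,
    leftTensor_add_left, leftTensor_smul_left, leftTensor_zero_left]
  module

lemma Dop_succ :
    Dop (K + 1) u =
      leftTensor (Eop true true) (Aop K u) + aF u • leftTensor (Eop false true) (Bop K u) +
      aF u • leftTensor (Eop true false) (Cop K u) +
      bF u ^ 2 • leftTensor (Eop true true) (Dop K u) +
      aF u ^ 2 • leftTensor (Eop false false) (Dop K u) := by
  rw [show Dop (K + 1) u = auxBlock (Umono (K + 1) u) false false from rfl, auxBlock_Umono_succ]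
  simp only [rBlock_false_false, rBlock_true_false, rBlock_false_true,
    Matrix.mul_add, Matrix.add_mul, Algebra.mul_smul_comm, Algebra.smul_mul_assoc, Eop_mul_Eop,
    ↓reduceIte, Bool.false_eq_true, Bool.true_eq_false, smul_zero, add_zero, zero_add, smul_smul,
    leftTensor_add_left, leftTensor_smul_left]
  module

end BlockRecursion

lemma Umono_zero (u : ℂ) : Umono 0 u = K0m 0 u := by
  simp [Umono, Tmono, Tbar]

lemma Aop_zero (u : ℂ) : Aop 0 u = dF u • 1 := by
  ext s t
  simp [Aop, Umono_zero, K0m, Km, Subsingleton.elim s t]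

lemma Bop_zero (u : ℂ) : Bop 0 u = 0 := by
  ext
  simp [Bop, Umono_zero, K0m, Km]

lemma Dop_zero (u : ℂ) : Dop 0 u = (-aF u) • 1 := by
  ext s t
  simp [Dop, Umono_zero, K0m, Km, Subsingleton.elim s t]

/-- `Q^(m+1)` for every `m`, with `Q^(1) = 0`: the new summand `(-1)^m q_{m+1,m+2}` merges the
two leftmost sites. -/
def chainQ : (m : ℕ) → Matrix (Conf m) (Conf (m + 1)) ℂ
  | 0 => 0
  | m + 1 => leftTensor 1 (chainQ m) +
      (-1 : ℂ) ^ m • leftContract (bra true) (leftTensor (Eop true false) 1)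

lemma qMerge_last (n : ℕ) :
    qMerge n (Fin.last n) = leftContract (bra true) (leftTensor (Eop true false) 1) := by
  have hsites (o : Conf (n + 1)) (i : Conf (n + 2)) :
      (∀ j : Fin (n + 1),
          ((j : ℕ) < n → o j = i j.castSucc) ∧ (n < (j : ℕ) → o j = i j.succ)) ↔
        (fun j : Fin n ↦ o j.castSucc) = fun j ↦ i j.castSucc.castSucc := by
    rw [Fin.forall_fin_succ', funext_iff]
    simp
  ext o i
  simp only [qMerge, leftContract, leftTensor, bra, Eop, Matrix.of_apply, Matrix.one_apply,
    Fin.succ_last, Fin.val_last, hsites]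
  split_ifs <;> simp_all

lemma qMerge_castSucc (n : ℕ) (k : Fin (n + 1)) :
    qMerge (n + 1) k.castSucc = leftTensor 1 (qMerge n k) := by
  have hsites (o : Conf (n + 2)) (i : Conf (n + 3)) :
      (∀ j : Fin (n + 2),
          ((j : ℕ) < k → o j = i j.castSucc) ∧ (k < (j : ℕ) → o j = i j.succ)) ↔
        o (Fin.last (n + 1)) = i (Fin.last (n + 2)) ∧
        ∀ j : Fin (n + 1), ((j : ℕ) < k → o j.castSucc = i j.castSucc.castSucc) ∧
          (k < (j : ℕ) → o j.castSucc = i j.succ.castSucc) := by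
    rw [Fin.forall_fin_succ']
    simp [Fin.is_le k, and_comm]
  ext o i
  simp only [qMerge, leftTensor, Matrix.of_apply, Matrix.one_apply, Fin.succ_castSucc,
    Fin.val_castSucc, hsites]
  split_ifs <;> simp_all

lemma Qop_eq_chainQ (n : ℕ) : Qop n = chainQ (n + 1) := by
  induction n with
  | zero =>
    simpa [Qop, chainQ] using qMerge_last 0
  | succ n ih =>
    rw [chainQ, ← ih, Qop, Qop, Fin.sum_univ_castSucc, leftTensor_sum]
    simp only [qMerge_castSucc, qMerge_last, Fin.val_castSucc, Fin.val_last,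
      leftTensor_smul_right]

section CombinatorialPoint

lemma cosh_ηc : Complex.cosh ηc = -(1 / 2) := by
  have h : ηc = ((2 * Real.pi / 3 : ℝ) : ℂ) * Complex.I := by
    rw [ηc]; push_cast; ring
  rw [h, Complex.cosh_mul_I, ← Complex.ofReal_cos,
    show (2 * Real.pi / 3 : ℝ) = Real.pi - Real.pi / 3 by ring, Real.cos_pi_sub,
    Real.cos_pi_div_three]
  norm_num

lemma sinh_ηc_sq : Complex.sinh ηc ^ 2 = -(3 / 4) := by
  linear_combination -Complex.cosh_sq_sub_sinh_sq ηc + (Complex.cosh ηc - 1 / 2) * cosh_ηc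

variable (u : ℂ)

lemma dF_eq_neg_aF_sub_bF : dF u = -aF u - bF u := by
  rw [dF, aF, bF, Complex.sinh_add, Complex.sinh_sub, cosh_ηc]
  ring

lemma aF_sq_add_aF_mul_bF_add_bF_sq : aF u ^ 2 + aF u * bF u + bF u ^ 2 = 1 := by
  have hη : Complex.sinh ηc ≠ 0 := fun h ↦ by simpa [h] using sinh_ηc_sq
  rw [aF, bF, Complex.sinh_add, cosh_ηc]
  field_simp
  linear_combination 4 * (Complex.cosh u ^ 2 - 1) * sinh_ηc_sq -
    3 * Complex.cosh_sq_sub_sinh_sq u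

end CombinatorialPoint

structure QCommRelations (m : ℕ) (u : ℂ) : Prop where
  A : chainQ m * Aop (m + 1) u = dF u ^ 2 • (Aop m u * chainQ m) +
    ((-1) ^ (m + 1) * dF u) • leftContract (bra true) (Bop m u)
  B : chainQ m * Bop (m + 1) u = dF u ^ 2 • (Bop m u * chainQ m)
  C : chainQ m * Cop (m + 1) u = dF u ^ 2 • (Cop m u * chainQ m) +
    (-1 : ℂ) ^ (m + 1) • (aF u • leftContract (bra true) (Aop m u) +
      leftContract (bra false) (Bop m u) + dF u • leftContract (bra true) (Dop m u))
  D : chainQ m * Dop (m + 1) u = dF u ^ 2 • (Dop m u * chainQ m) +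
    ((-1) ^ (m + 1) * bF u) • leftContract (bra true) (Bop m u)

lemma qCommRelations_zero (u : ℂ) : QCommRelations 0 u where
  A := by simp [chainQ, Bop_zero]
  B := by simp [chainQ]
  C := by
    simp only [chainQ, Matrix.zero_mul, Matrix.mul_zero, smul_zero, zero_add, Aop_zero, Bop_zero,
      Dop_zero, leftContract_smul_right, leftContract_zero_right, add_zero]
    module
  D := by simp [chainQ, Bop_zero]

lemma QCommRelations.succ {m : ℕ} {u : ℂ} (h : QCommRelations m u) :
    QCommRelations (m + 1) u := by
  have hd := dF_eq_neg_aF_sub_bF u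
  have habd := aF_sq_add_aF_mul_bF_add_bF_sq u
  obtain ⟨hA, hB, hC, hD⟩ := h
  -- Peel the leftmost site off `Q^(m+2)` and `𝒳^(m+2)`, apply the induction hypothesis to the
  -- resulting `Q^(m+1) 𝒳^(m+1)`, then expand the remaining `𝒳^(m+1)` and compare coefficients.
  constructor <;>
  simp only [chainQ, Aop_succ (m + 1) u, Bop_succ (m + 1) u, Cop_succ (m + 1) u,
    Dop_succ (m + 1) u, Matrix.mul_add, Matrix.add_mul, Matrix.mul_smul, Matrix.smul_mul,
    leftTensor_mul_leftTensor, leftContract_mul_leftTensor, mul_leftContract, vecMul_bra_Eop,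
    Matrix.one_mul, ↓reduceIte, Bool.true_eq_false, leftContract_zero_left, smul_zero,
    add_zero] <;>
  simp only [hA, hB, hC, hD] <;>
  simp only [Aop_succ m u, Bop_succ m u, Cop_succ m u, Dop_succ m u,
    Matrix.mul_add, Matrix.add_mul, Matrix.mul_smul, Matrix.smul_mul,
    leftTensor_mul_leftTensor, Eop_mul_Eop, Matrix.one_mul, Matrix.mul_one, ↓reduceIte,
    Bool.true_eq_false, leftTensor_zero_left, smul_zero, add_zero, zero_add,
    leftTensor_add_right, leftTensor_smul_right, leftContract_add_right, leftContract_smul_right,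
    leftTensor_leftContract, smul_add, smul_smul] <;>
  match_scalars <;>
  grind

lemma qCommRelations (m : ℕ) (u : ℂ) : QCommRelations m u := by
  induction m with
  | zero => exact qCommRelations_zero u
  | succ m ih => exact ih.succ

end XXZ

/-- Theorem 1, 𝒜-relation: for every `N = n+2 ≥ 2` and every `u ∈ ℂ`,
`Q^(N) ∘ 𝒜^(N)(u) - d(u)² 𝒜^(N-1)(u) ∘ Q^(N) = (-1)^N c(u) d(u) (E⁺ ⊗ ℬ^(N-1)(u))`
(`Qop n = Q^(n+2)`). -/
theorem QA_commutation (n : ℕ) (u : ℂ) :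
    Qop n * Aop (n + 2) u - dF u ^ 2 • (Aop (n + 1) u * Qop n)
      = ((-1 : ℂ) ^ (n + 2) * (cF u * dF u)) • Etens n true (Bop (n + 1) u) := by
  rw [XXZ.Qop_eq_chainQ, (XXZ.qCommRelations (n + 1) u).A, cF, one_mul, add_sub_cancel_left]
  rfl
end
end

section
/- (Recursion for 𝒜) For every N ≥ 1 and every u ∈ ℂ, the monodromy-matrix entry on the length-(N+1) chain satisfies 𝒜^(N+1)(u) = a(u)² E⁺₊ ⊗ 𝒜^(N)(u) + b(u)² E⁻₋ ⊗ 𝒜^(N)(u) + a(u)c(u) E⁻₊ ⊗ ℬ^(N)(u) + a(u)c(u) E⁺₋ ⊗ 𝒞^(N)(u) + c(u)² E⁻₋ ⊗ 𝒟^(N)(u), where E^ε_{ε′} acts on the new site N+1 and the size-N operators act on sites N,…,1. -/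
noncomputable section
open Complex Matrix

/-! Peeling off the leftmost site: `T^(N+1) = (T^(N) ⊗ 1) R_{0,N+1}`,
`T̄^(N+1) = R_{N+1,0} (T̄^(N) ⊗ 1)` and `K₀⁻` acts as `K₀⁻ ⊗ 1`, so
`U^(N+1) = R_{N+1,0} (U^(N) ⊗ 1) R_{0,N+1}`. In the `(v₊, v₊)` auxiliary entry one sums over the
intermediate spins on the auxiliary space and the new site, and spin conservation of `R` leaves
exactly the five terms of the recursion. -/

open scoped Kronecker

namespace Conf

theorem sum_succ {M : Type*} [AddCommMonoid M] {N : ℕ} (f : Conf (N + 1) → M) :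
    ∑ s, f s = ∑ p : Bool, ∑ s : Conf N, f (Fin.snoc s p) := by
  rw [← (Fin.snocEquiv fun _ => Bool).sum_comp, Fintype.sum_prod_type]
  rfl

theorem snoc_eqOn_compl_castSucc_iff {N : ℕ} (i : Fin N) {s t : Conf N} {p q : Bool} :
    (∀ j, j ≠ i.castSucc → (Fin.snoc s p : Conf (N + 1)) j = (Fin.snoc t q : Conf (N + 1)) j) ↔
      p = q ∧ ∀ j, j ≠ i → s j = t j := by
  simp [Fin.forall_fin_succ', (Fin.castSucc_lt_last i).ne', and_comm]

theorem snoc_eqOn_compl_last_iff {N : ℕ} {s t : Conf N} {p q : Bool} :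
    (∀ j, j ≠ Fin.last N → (Fin.snoc s p : Conf (N + 1)) j = (Fin.snoc t q : Conf (N + 1)) j) ↔
      s = t := by
  simp [Fin.forall_fin_succ', (Fin.castSucc_lt_last _).ne, funext_iff]

theorem matrix_ext_snoc {N : ℕ} {A B : Matrix (Bool × Conf (N + 1)) (Bool × Conf (N + 1)) ℂ}
    (h : ∀ a s p b t q,
      A (a, Fin.snoc s p) (b, Fin.snoc t q) = B (a, Fin.snoc s p) (b, Fin.snoc t q)) :
    A = B := by
  ext ⟨a, x⟩ ⟨b, y⟩
  rw [← Fin.snoc_init_self x, ← Fin.snoc_init_self y]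
  exact h ..

end Conf

def lastSiteEquiv (N : ℕ) : (Bool × Conf N) × Bool ≃ Bool × Conf (N + 1) :=
  (Equiv.prodAssoc _ _ _).trans
    ((Equiv.refl Bool).prodCongr ((Equiv.prodComm _ _).trans (Fin.snocEquiv fun _ => Bool)))

@[simp]
theorem lastSiteEquiv_symm_apply_snoc {N : ℕ} (a : Bool) (s : Conf N) (p : Bool) :
    (lastSiteEquiv N).symm (a, Fin.snoc s p) = ((a, s), p) := by
  rw [Equiv.symm_apply_eq]
  rfl

def extendLast (N : ℕ) : Matrix (Bool × Conf N) (Bool × Conf N) ℂ →*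
    Matrix (Bool × Conf (N + 1)) (Bool × Conf (N + 1)) ℂ where
  toFun M := reindex (lastSiteEquiv N) (lastSiteEquiv N) (M ⊗ₖ (1 : Matrix Bool Bool ℂ))
  map_one' := by simp
  map_mul' M M' := by
    simp only [← coe_reindexAlgEquiv ℂ ℂ, ← map_mul, ← mul_kronecker_mul, mul_one]

theorem extendLast_apply_snoc {N : ℕ} (M : Matrix (Bool × Conf N) (Bool × Conf N) ℂ)
    (a : Bool) (s : Conf N) (p : Bool) (b : Bool) (t : Conf N) (q : Bool) :
    extendLast N M (a, Fin.snoc s p) (b, Fin.snoc t q) =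
      if p = q then M (a, s) (b, t) else 0 := by
  simp [extendLast, one_apply]

def localOp (N : ℕ) (i : Fin N) (F : Matrix (Bool × Bool) (Bool × Bool) ℂ) :
    Matrix (Bool × Conf N) (Bool × Conf N) ℂ :=
  of fun x y => if ∀ j, j ≠ i → x.2 j = y.2 j then F (x.1, x.2 i) (y.1, y.2 i) else 0

theorem R0i_eq_localOp (N : ℕ) (u : ℂ) (i : Fin N) : R0i N u i = localOp N i (Rm u) := rfl

theorem Ri0_eq_localOp (N : ℕ) (u : ℂ) (i : Fin N) :
    Ri0 N u i = localOp N i ((Rm u).submatrix Prod.swap Prod.swap) := rfl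

theorem localOp_castSucc {N : ℕ} (i : Fin N) (F : Matrix (Bool × Bool) (Bool × Bool) ℂ) :
    localOp (N + 1) i.castSucc F = extendLast N (localOp N i F) := by
  refine Conf.matrix_ext_snoc fun a s p b t q => ?_
  simp only [localOp, of_apply, extendLast_apply_snoc, Conf.snoc_eqOn_compl_castSucc_iff,
    Fin.snoc_castSucc, ite_and]

theorem K0m_succ (N : ℕ) (u : ℂ) : K0m (N + 1) u = extendLast N (K0m N u) := by
  refine Conf.matrix_ext_snoc fun a s p b t q => ?_
  simp only [K0m, of_apply, extendLast_apply_snoc, Fin.snoc_inj, and_comm (a := s = t), ite_and]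

theorem Tmono_succ (N : ℕ) (u : ℂ) :
    Tmono (N + 1) u = extendLast N (Tmono N u) * R0i (N + 1) u (Fin.last N) := by
  simp only [Tmono, List.ofFn_succ', List.prod_concat, map_list_prod, List.map_ofFn,
    Function.comp_def, R0i_eq_localOp, localOp_castSucc]

theorem Tbar_succ (N : ℕ) (u : ℂ) :
    Tbar (N + 1) u = Ri0 (N + 1) u (Fin.last N) * extendLast N (Tbar N u) := by
  simp only [Tbar, List.ofFn_succ', List.concat_eq_append, List.reverse_concat', List.prod_cons,
    map_list_prod, List.map_reverse, List.map_ofFn, Function.comp_def, Ri0_eq_localOp,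
    localOp_castSucc]

theorem Umono_succ (N : ℕ) (u : ℂ) :
    Umono (N + 1) u
      = Ri0 (N + 1) u (Fin.last N) * extendLast N (Umono N u) * R0i (N + 1) u (Fin.last N) := by
  simp only [Umono, Tbar_succ, K0m_succ, Tmono_succ, map_mul, Matrix.mul_assoc]

theorem localOp_last_mul_apply_snoc {N : ℕ} (F : Matrix (Bool × Bool) (Bool × Bool) ℂ)
    (M : Matrix (Bool × Conf (N + 1)) (Bool × Conf (N + 1)) ℂ) (a : Bool) (s : Conf N) (p : Bool)
    (y : Bool × Conf (N + 1)) :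
    (localOp (N + 1) (Fin.last N) F * M) (a, Fin.snoc s p) y
      = ∑ α, ∑ r, F (a, p) (α, r) * M (α, Fin.snoc s r) y := by
  simp only [mul_apply, Fintype.sum_prod_type, Conf.sum_succ, localOp, of_apply,
    Conf.snoc_eqOn_compl_last_iff, Fin.snoc_last, ite_mul, zero_mul, Finset.sum_ite_eq,
    Finset.mem_univ, if_true]

theorem mul_localOp_last_apply_snoc {N : ℕ} (F : Matrix (Bool × Bool) (Bool × Bool) ℂ)
    (M : Matrix (Bool × Conf (N + 1)) (Bool × Conf (N + 1)) ℂ) (x : Bool × Conf (N + 1))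
    (b : Bool) (t : Conf N) (q : Bool) :
    (M * localOp (N + 1) (Fin.last N) F) x (b, Fin.snoc t q)
      = ∑ β, ∑ r, M x (β, Fin.snoc t r) * F (β, r) (b, q) := by
  simp only [mul_apply, Fintype.sum_prod_type, Conf.sum_succ, localOp, of_apply,
    Conf.snoc_eqOn_compl_last_iff, Fin.snoc_last, mul_ite, mul_zero, Finset.sum_ite_eq',
    Finset.mem_univ, if_true]

theorem Umono_succ_apply_snoc (N : ℕ) (u : ℂ) (a : Bool) (s : Conf N) (p : Bool) (b : Bool)
    (t : Conf N) (q : Bool) :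
    Umono (N + 1) u (a, Fin.snoc s p) (b, Fin.snoc t q)
      = ∑ α, ∑ β, ∑ r, Rm u (p, a) (r, α) * Umono N u (α, s) (β, t) * Rm u (β, r) (b, q) := by
  rw [Umono_succ, R0i_eq_localOp, mul_localOp_last_apply_snoc, Ri0_eq_localOp]
  simp only [localOp_last_mul_apply_snoc, extendLast_apply_snoc, submatrix_apply,
    Prod.swap_prod_mk, mul_ite, mul_zero, Fintype.sum_bool, Bool.true_eq_false,
    Bool.false_eq_true, if_true, if_false]
  ring

theorem A_recursion_general (N : ℕ) (u : ℂ) :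
    Aop (N + 1) u
      = aF u ^ 2 • siteTens N (Eop true true) (Aop N u)
        + bF u ^ 2 • siteTens N (Eop false false) (Aop N u)
        + (aF u * cF u) • siteTens N (Eop false true) (Bop N u)
        + (aF u * cF u) • siteTens N (Eop true false) (Cop N u)
        + cF u ^ 2 • siteTens N (Eop false false) (Dop N u) := by
  ext x y
  induction x using Fin.snocCases with | snoc s p => ?_
  induction y using Fin.snocCases with | snoc t q => ?_
  simp only [Aop, Bop, Cop, Dop, siteTens, Eop, Matrix.add_apply, Matrix.smul_apply, of_apply,
    smul_eq_mul, Fin.snoc_last, Fin.snoc_castSucc, Umono_succ_apply_snoc, Fintype.sum_bool]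
  cases p <;> cases q <;> simp [Rm, cF] <;> ring

/-- recursion for 𝒜: for every `N ≥ 1` and every `u ∈ ℂ`,
`𝒜^(N+1)(u) = a² E⁺₊ ⊗ 𝒜^(N) + b² E⁻₋ ⊗ 𝒜^(N) + ac E⁻₊ ⊗ ℬ^(N) + ac E⁺₋ ⊗ 𝒞^(N)
  + c² E⁻₋ ⊗ 𝒟^(N)`, the first factor acting on the new (leftmost) site `N+1`. -/
theorem A_recursion (N : ℕ) (hN : 1 ≤ N) (u : ℂ) :
    Aop (N + 1) u
      = aF u ^ 2 • siteTens N (Eop true true) (Aop N u)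
        + bF u ^ 2 • siteTens N (Eop false false) (Aop N u)
        + (aF u * cF u) • siteTens N (Eop false true) (Bop N u)
        + (aF u * cF u) • siteTens N (Eop true false) (Cop N u)
        + cF u ^ 2 • siteTens N (Eop false false) (Dop N u) :=
  A_recursion_general N u
end
end

section
/- For every N ≥ 2, the SUSY operator applied to the pseudovacuum produces a one-magnon Bethe state at spectral parameter η: Q^(N) Ω^(N) = (−1)^N ℬ^(N−1)(η) Ω^(N−1). -/
noncomputable section
open Complex Matrix

/-! ### Auxiliary material for the proof -/

/-- All-up configuration. -/
def topC (N : ℕ) : Conf N := fun _ => true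

/-- Configuration with a single down spin at index `j`. -/
def flipC {N : ℕ} (j : Fin N) : Conf N := fun i => if i = j then false else true

lemma sum_pick {α : Type*} [Fintype α] [DecidableEq α] (f : α → ℂ) (a : α) :
    (∑ t : α, f t * (if t = a then 1 else 0)) = f a := by
  rw [Finset.sum_congr rfl (fun t _ =>
    show f t * (if t = a then 1 else 0) = if t = a then f t else 0 by
      by_cases ht : t = a <;> simp [ht])]
  rw [Finset.sum_ite_eq' Finset.univ]
  simp

lemma Omega_eq (N : ℕ) (t : Conf N) : Omega N t = if t = topC N then 1 else 0 := by
  have h : (∀ j, t j = true) ↔ t = topC N :=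
    ⟨fun h => funext fun j => h j, fun h j => by rw [h]; rfl⟩
  simp [Omega, h]

lemma E1 (N : ℕ) (u : ℂ) (i : Fin N) (x : Bool × Conf N) :
    R0i N u i x (false, topC N)
      = bF u * (if x = (false, topC N) then 1 else 0)
        + (if x = (true, flipC i) then 1 else 0) := by
  obtain ⟨e, s⟩ := x
  simp only [R0i, Matrix.of_apply]
  by_cases hc : ∀ j, j ≠ i → s j = topC N j
  · rw [if_pos hc]
    cases e with
    | false =>
      by_cases hsi : s i = true
      · have hs : s = topC N := funext fun j => by
          by_cases hj : j = i
          · rw [hj]; exact hsi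
          · exact hc j hj
        have hs' : s ≠ flipC i := by
          intro h; have := congrFun h i; rw [hsi] at this; simp [flipC] at this
        simp [Rm, hs, hsi, hs', topC, Prod.ext_iff]
      · have hb : s i = false := by simp_all
        have hs : s ≠ topC N := by
          intro h; have := congrFun h i; rw [hb] at this; simp [topC] at this
        have ht : topC N i = true := rfl
        simp [Rm, hb, hs, ht, Prod.ext_iff]
    | true =>
      by_cases hsi : s i = true
      · have hs' : s ≠ flipC i := by
          intro h; have := congrFun h i; rw [hsi] at this; simp [flipC] at this
        simp [Rm, hsi, hs', Prod.ext_iff]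
      · have hb : s i = false := by simp_all
        have hs : s = flipC i := funext fun j => by
          by_cases hj : j = i
          · rw [hj, hb]; simp [flipC]
          · rw [hc j hj]; simp [flipC, hj, topC]
        have ht : topC N i = true := rfl
        have hf : flipC i i = false := by simp [flipC]
        simp [Rm, hb, hs, cF, ht, hf, Prod.ext_iff]
  · rw [if_neg hc]
    push_neg at hc
    obtain ⟨j, hji, hsj⟩ := hc
    have hj0 : s j = false := by simp_all [topC]
    have h1 : s ≠ topC N := by
      intro h; have := congrFun h j; rw [hj0] at this; simp [topC] at this
    have h2 : s ≠ flipC i := by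
      intro h; have := congrFun h j; rw [hj0] at this; simp [flipC, hji] at this
    simp [h1, h2, Prod.ext_iff]

lemma E2 (N : ℕ) (u : ℂ) (i j : Fin N) (hji : j ≠ i) (x : Bool × Conf N) :
    R0i N u i x (true, flipC j)
      = aF u * (if x = (true, flipC j) then 1 else 0) := by
  obtain ⟨e, s⟩ := x
  simp only [R0i, Matrix.of_apply]
  have hfl : flipC j i = true := by simp [flipC, Ne.symm hji]
  by_cases hc : ∀ l, l ≠ i → s l = flipC j l
  · rw [if_pos hc]
    cases e with
    | true =>
      by_cases hsi : s i = true
      · have hs : s = flipC j := funext fun l => by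
          by_cases hl : l = i
          · rw [hl, hsi, hfl]
          · exact hc l hl
        simp [Rm, hsi, hfl, hs, Prod.ext_iff]
      · have hb : s i = false := by simp_all
        have hs : s ≠ flipC j := by
          intro h; have := congrFun h i; rw [hb, hfl] at this; exact Bool.noConfusion this
        simp [Rm, hb, hfl, hs, Prod.ext_iff]
    | false =>
      by_cases hsi : s i = true
      · simp [Rm, hsi, hfl, Prod.ext_iff]
      · have hb : s i = false := by simp_all
        simp [Rm, hb, hfl, Prod.ext_iff]
  · rw [if_neg hc]
    push_neg at hc
    obtain ⟨l, hli, hsl⟩ := hc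
    have hs : s ≠ flipC j := by
      intro h; exact hsl (congrFun h l)
    simp [hs, Prod.ext_iff]

lemma col (N : ℕ) (u : ℂ) (L : List (Fin N)) :
    L.Nodup → ∀ x : Bool × Conf N,
    (L.map (R0i N u)).prod x (false, topC N)
      = (if x = (false, topC N) then (bF u) ^ L.length else 0)
        + ∑ j : Fin N,
            (if j ∈ L then
              (aF u) ^ (L.idxOf j) * (bF u) ^ (L.length - 1 - L.idxOf j) else 0)
              * (if x = (true, flipC j) then 1 else 0) := by
  induction L with
  | nil =>
      intro _ x
      simp [Matrix.one_apply]
  | cons i L ih =>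
      intro hL x
      obtain ⟨hiL, hL'⟩ := List.nodup_cons.mp hL
      rw [List.map_cons, List.prod_cons, Matrix.mul_apply]
      have hrw : ∀ z : Bool × Conf N,
          R0i N u i x z * (L.map (R0i N u)).prod z (false, topC N)
            = (if z = (false, topC N) then R0i N u i x z * (bF u) ^ L.length else 0)
              + ∑ j : Fin N, (if z = (true, flipC j) then
                  (if j ∈ L then
                    (aF u) ^ (L.idxOf j) * (bF u) ^ (L.length - 1 - L.idxOf j) else 0)
                    * R0i N u i x z else 0) := by
        intro z
        rw [ih hL' z, mul_add, Finset.mul_sum]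
        congr 1
        · by_cases hz : z = (false, topC N) <;> simp [hz]
        · refine Finset.sum_congr rfl fun j _ => ?_
          by_cases hz : z = (true, flipC j) <;> simp [hz] <;> ring
      rw [Finset.sum_congr rfl fun z _ => hrw z, Finset.sum_add_distrib]
      have h1 : (∑ z : Bool × Conf N,
          if z = (false, topC N) then R0i N u i x z * (bF u) ^ L.length else 0)
          = R0i N u i x (false, topC N) * (bF u) ^ L.length := by
        rw [Finset.sum_ite_eq' Finset.univ]; simp
      have h2 : (∑ z : Bool × Conf N, ∑ j : Fin N, (if z = (true, flipC j) then
              (if j ∈ L then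
                (aF u) ^ (L.idxOf j) * (bF u) ^ (L.length - 1 - L.idxOf j) else 0)
                * R0i N u i x z else 0))
          = ∑ j : Fin N, (if j ∈ L then
              (aF u) ^ (L.idxOf j) * (bF u) ^ (L.length - 1 - L.idxOf j) else 0)
              * R0i N u i x (true, flipC j) := by
        rw [Finset.sum_comm]
        refine Finset.sum_congr rfl fun j _ => ?_
        rw [Finset.sum_ite_eq' Finset.univ]; simp
      rw [h1, h2, E1]
      have h3 : ∀ j : Fin N, (if j ∈ L then
              (aF u) ^ (L.idxOf j) * (bF u) ^ (L.length - 1 - L.idxOf j) else 0)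
              * R0i N u i x (true, flipC j)
            = (if j ∈ L then
              (aF u) ^ (L.idxOf j) * (bF u) ^ (L.length - 1 - L.idxOf j) else 0)
              * (aF u * (if x = (true, flipC j) then 1 else 0)) := by
        intro j
        by_cases hj : j ∈ L
        · have hji : j ≠ i := fun h => hiL (h ▸ hj)
          rw [E2 N u i j hji]
        · simp [hj]
      rw [Finset.sum_congr rfl fun j _ => h3 j]
      -- now pure algebra over the sums
      have h4 : (∑ j : Fin N, (if j = i then (bF u) ^ L.length else 0)
              * (if x = (true, flipC j) then 1 else 0))
          = (if x = (true, flipC i) then 1 else 0) * (bF u) ^ L.length := by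
        rw [Finset.sum_congr rfl (fun j _ =>
          show (if j = i then (bF u) ^ L.length else 0)
              * (if x = (true, flipC j) then 1 else 0)
            = if j = i then (bF u) ^ L.length
                * (if x = (true, flipC j) then 1 else 0) else 0 by
          by_cases hj : j = i <;> simp [hj])]
        rw [Finset.sum_ite_eq' Finset.univ i
          (fun j => (bF u) ^ L.length * (if x = (true, flipC j) then 1 else 0))]
        simp [mul_comm]
      rw [add_mul, ← h4, add_assoc, ← Finset.sum_add_distrib]
      have h5 : ∀ j : Fin N,
          ((if j = i then (bF u) ^ L.length else 0)
              * (if x = (true, flipC j) then 1 else 0)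
            + (if j ∈ L then
                (aF u) ^ (L.idxOf j) * (bF u) ^ (L.length - 1 - L.idxOf j) else 0)
              * (aF u * (if x = (true, flipC j) then 1 else 0)))
          = (if j ∈ i :: L then
              (aF u) ^ ((i :: L).idxOf j)
                * (bF u) ^ ((i :: L).length - 1 - (i :: L).idxOf j) else 0)
              * (if x = (true, flipC j) then 1 else 0) := by
        intro j
        by_cases hj : j = i
        · subst hj
          have hjL : j ∉ L := hiL
          simp [hjL, List.idxOf_cons_self]
        · have hmem : j ∈ i :: L ↔ j ∈ L := by simp [List.mem_cons, hj]
          by_cases hjL : j ∈ L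
          · rw [if_neg hj, if_pos hjL, if_pos (hmem.mpr hjL),
                List.idxOf_cons_ne L (Ne.symm hj)]
            have hlen : (i :: L).length - 1 - ((L.idxOf j).succ)
                = L.length - 1 - L.idxOf j := by
              simp [List.length_cons]
              omega
            rw [hlen, pow_succ]
            ring
          · simp [hj, hjL, hmem]
      rw [Finset.sum_congr rfl fun j _ => h5 j]
      congr 1
      by_cases hx : x = (false, topC N) <;> simp [hx, List.length_cons, pow_succ] <;> ring

lemma Rm_swap (u : ℂ) (p q r s : Bool) : Rm u (q, p) (s, r) = Rm u (p, q) (r, s) := by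
  cases p <;> cases q <;> cases r <;> cases s <;> simp [Rm]

lemma Ri0_eq (N : ℕ) (u : ℂ) (i : Fin N) : Ri0 N u i = R0i N u i := by
  ext x y
  simp only [Ri0, R0i, Matrix.of_apply]
  split
  · exact Rm_swap u x.1 (x.2 i) y.1 (y.2 i)
  · rfl

lemma Tmono_eq (N : ℕ) (u : ℂ) :
    Tmono N u = ((List.finRange N).map (R0i N u)).prod := by
  rw [Tmono, List.ofFn_eq_map]

lemma Tbar_eq (N : ℕ) (u : ℂ) :
    Tbar N u = (((List.finRange N).reverse).map (R0i N u)).prod := by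
  rw [Tbar]
  simp only [Ri0_eq]
  rw [List.ofFn_eq_map, List.map_reverse]

lemma idx_rev (N : ℕ) (j : Fin N) :
    (List.finRange N).reverse.idxOf j = N - 1 - (j : ℕ) := by
  have hmem : j ∈ (List.finRange N).reverse := by simp
  have hlt : (List.finRange N).reverse.idxOf j < (List.finRange N).reverse.length :=
    List.idxOf_lt_length_iff.mpr hmem
  have hget := List.getElem_idxOf hlt
  have hlen : (List.finRange N).reverse.length = N := by simp
  rw [List.getElem_reverse] at hget
  rw [List.getElem_finRange] at hget
  have hval := congrArg Fin.val hget
  simp at hval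
  omega

lemma K0m_eq (N : ℕ) (u : ℂ) :
    K0m N u = Matrix.diagonal
      (fun z : Bool × Conf N => if z.1 = true then dF u else -aF u) := by
  ext ⟨e, s⟩ ⟨f, t⟩
  simp only [K0m, Km, Matrix.of_apply, Matrix.diagonal_apply]
  by_cases hst : s = t
  · by_cases hef : e = f
    · subst hst; subst hef; cases e <;> simp
    · simp [hst, hef, Prod.ext_iff]
  · simp [hst, Prod.ext_iff]

lemma ηc_eq : ηc = ((2 * Real.pi / 3 : ℝ) : ℂ) * Complex.I := by
  simp only [ηc]
  push_cast
  ring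

lemma sinh_ηc : Complex.sinh ηc = (Real.sin (2 * Real.pi / 3) : ℝ) * Complex.I := by
  rw [ηc_eq, Complex.sinh_mul_I, Complex.ofReal_sin]

lemma sinh_ηc_ne : Complex.sinh ηc ≠ 0 := by
  rw [sinh_ηc]
  have hpos : 0 < Real.sin (2 * Real.pi / 3) := by
    apply Real.sin_pos_of_pos_of_lt_pi
    · positivity
    · nlinarith [Real.pi_pos]
  exact mul_ne_zero (by exact_mod_cast hpos.ne') Complex.I_ne_zero

lemma cosh_ηc : Complex.cosh ηc = -(1 / 2 : ℂ) := by
  rw [ηc_eq, Complex.cosh_mul_I, ← Complex.ofReal_cos]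
  rw [show (2 * Real.pi / 3 : ℝ) = Real.pi - Real.pi / 3 by ring,
    Real.cos_pi_sub, Real.cos_pi_div_three]
  norm_num

lemma b_ηc : bF ηc = 1 := div_self sinh_ηc_ne

lemma d_ηc : dF ηc = 0 := by simp [dF]

lemma a_ηc : aF ηc = -1 := by
  rw [aF, show ηc + ηc = 2 * ηc by ring, Complex.sinh_two_mul, cosh_ηc]
  rw [show 2 * Complex.sinh ηc * -(1 / 2 : ℂ) = -Complex.sinh ηc by ring,
    neg_div, div_self sinh_ηc_ne]

lemma U_entry (N : ℕ) (x : Bool × Conf N) :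
    Umono N ηc x (false, topC N) = Tbar N ηc x (false, topC N) := by
  rw [Umono, Matrix.mul_assoc, Matrix.mul_apply]
  have hKT : ∀ z : Bool × Conf N, (K0m N ηc * Tmono N ηc) z (false, topC N)
      = if z = (false, topC N) then 1 else 0 := by
    intro z
    rw [K0m_eq, Matrix.diagonal_mul, Tmono_eq,
      col N ηc (List.finRange N) (List.nodup_finRange N) z]
    obtain ⟨e, s⟩ := z
    cases e with
    | true => simp [d_ηc, Prod.ext_iff]
    | false =>
      have : ∀ j : Fin N, ((false, s) : Bool × Conf N) ≠ (true, flipC j) := by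
        intro j h; exact Bool.noConfusion (congrArg Prod.fst h)
      simp [a_ηc, b_ηc, this, Prod.ext_iff]
  rw [Finset.sum_congr rfl fun z _ => by rw [hKT z]]
  exact sum_pick (fun z => Tbar N ηc x z) (false, topC N)

lemma qMerge_top (n : ℕ) (k : Fin (n + 1)) (o : Conf (n + 1)) :
    qMerge n k o (topC (n + 2)) = if o = flipC k then 1 else 0 := by
  simp only [qMerge, Matrix.of_apply]
  by_cases h : o = flipC k
  · subst h
    rw [if_pos, if_pos rfl]
    refine ⟨rfl, rfl, by simp [flipC], fun j => ⟨fun hj => ?_, fun hj => ?_⟩⟩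
    · have : j ≠ k := fun hh => by rw [hh] at hj; omega
      simp [flipC, this, topC]
    · have : j ≠ k := fun hh => by rw [hh] at hj; omega
      simp [flipC, this, topC]
  · rw [if_neg h, if_neg]
    rintro ⟨-, -, hk, hall⟩
    apply h
    funext j
    by_cases hj : j = k
    · rw [hj, hk]; simp [flipC]
    · have hne : (j : ℕ) ≠ (k : ℕ) := fun hh => hj (Fin.ext hh)
      rcases Nat.lt_or_ge (j : ℕ) (k : ℕ) with hlt | hge
      · rw [(hall j).1 hlt]; simp [flipC, hj, topC]
      · have hgt : (k : ℕ) < (j : ℕ) := by omega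
        rw [(hall j).2 hgt]; simp [flipC, hj, topC]

lemma pow_neg_one_coeff (n : ℕ) (j : ℕ) (hj : j ≤ n) :
    ((-1 : ℂ)) ^ (n + 2) * (-1) ^ (n - j) = (-1) ^ j := by
  rw [← pow_add, show (n + 2) + (n - j) = j + 2 * (n + 1 - j) by omega,
    pow_add, pow_mul]
  simp

/-- for every `N = n+2 ≥ 2`,
`Q^(N) Ω^(N) = (-1)^N ℬ^(N-1)(η) Ω^(N-1)` (`Qop n = Q^(n+2)`). -/
theorem Q_pseudovacuum (n : ℕ) :
    (Qop n).mulVec (Omega (n + 2))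
      = ((-1 : ℂ) ^ (n + 2)) • (Bop (n + 1) ηc).mulVec (Omega (n + 1)) := by
  funext o
  -- Right-hand side
  have hRHS : (Bop (n + 1) ηc).mulVec (Omega (n + 1)) o
      = ∑ j : Fin (n + 1), (-1 : ℂ) ^ (n - (j : ℕ)) * (if o = flipC j then 1 else 0) := by
    have h0 : (Bop (n + 1) ηc).mulVec (Omega (n + 1)) o
        = Bop (n + 1) ηc o (topC (n + 1)) := by
      unfold Matrix.mulVec dotProduct
      simp only [Omega_eq]
      exact sum_pick (fun t => Bop (n + 1) ηc o t) (topC (n + 1))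
    rw [h0]
    show Umono (n + 1) ηc (true, o) (false, topC (n + 1)) = _
    rw [U_entry, Tbar_eq,
      col (n + 1) ηc ((List.finRange (n + 1)).reverse)
        (List.nodup_reverse.mpr (List.nodup_finRange (n + 1))) (true, o)]
    have hne : ((true, o) : Bool × Conf (n + 1)) ≠ (false, topC (n + 1)) := by
      intro h; exact Bool.noConfusion (congrArg Prod.fst h)
    rw [if_neg hne, zero_add]
    refine Finset.sum_congr rfl fun j _ => ?_
    have hmem : j ∈ (List.finRange (n + 1)).reverse := by simp
    rw [if_pos hmem, idx_rev, a_ηc, b_ηc, one_pow, mul_one]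
    have hval : (n + 1) - 1 - (j : ℕ) = n - (j : ℕ) := by omega
    rw [hval]
    congr 1
    by_cases ho : o = flipC j
    · simp [ho]
    · have : ((true, o) : Bool × Conf (n + 1)) ≠ (true, flipC j) := by
        intro h; exact ho (congrArg Prod.snd h)
      simp [this, ho]
  -- Left-hand side
  have hLHS : (Qop n).mulVec (Omega (n + 2)) o
      = ∑ k : Fin (n + 1), (-1 : ℂ) ^ (k : ℕ) * (if o = flipC k then 1 else 0) := by
    unfold Matrix.mulVec dotProduct
    simp only [Omega_eq]
    rw [sum_pick (fun t => Qop n o t) (topC (n + 2))]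
    show Qop n o (topC (n + 2)) = _
    rw [Qop, Matrix.sum_apply]
    refine Finset.sum_congr rfl fun k _ => ?_
    rw [Matrix.smul_apply, qMerge_top]
    simp
  rw [hLHS, Pi.smul_apply, hRHS, smul_eq_mul, Finset.mul_sum]
  refine Finset.sum_congr rfl fun j _ => ?_
  rw [← mul_assoc, pow_neg_one_coeff n (j : ℕ) (by omega)]
end
end

section
/- (Transfer-matrix eigenvalue pairing) For every N ≥ 2, every m ≥ 0, all λ₁,…,λ_m ∈ ℂ, and every u ∈ ℂ such that sinh(2u+η) ≠ 0, sinh(u−η) ≠ 0, sinh(u+2η) ≠ 0, and sinh(u−λⱼ) ≠ 0 and sinh(u+λⱼ+η) ≠ 0 for all j: τ^(N)(u; λ₁,…,λ_m) = d(u)² · τ^(N−1)(u; λ₁,…,λ_m, η). -/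
noncomputable section
open Complex Matrix

/-- `Δ₊^(N)(u) = a(u)^{2N} sinh(u-η)/sinh η`. -/
def DeltaP (N : ℕ) (u : ℂ) : ℂ :=
  aF u ^ (2 * N) * Complex.sinh (u - ηc) / Complex.sinh ηc

/-- `Δ₋^(N)(u) = -b(u)^{2N} sinh(2u) sinh(u+2η)/sinh η`. -/
def DeltaM (N : ℕ) (u : ℂ) : ℂ :=
  -(bF u ^ (2 * N)) * Complex.sinh (2 * u) * Complex.sinh (u + 2 * ηc) / Complex.sinh ηc

/-- `λ₁,…,λ_m` satisfy the Bethe equations for the length-`N` chain (cross-multiplied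
form): for every `j`,
`-sinh(2λⱼ) Δ₊^(N)(λⱼ) ∏_{k≠j} sinh(λⱼ-λₖ-η) sinh(λⱼ+λₖ)
  = Δ₋^(N)(λⱼ) ∏_{k≠j} sinh(λⱼ-λₖ+η) sinh(λⱼ+λₖ+2η)`. -/
def BetheEq (N m : ℕ) (lam : Fin m → ℂ) : Prop :=
  ∀ j : Fin m,
    -Complex.sinh (2 * lam j) * DeltaP N (lam j) *
        ∏ k ∈ Finset.univ.erase j,
          (Complex.sinh (lam j - lam k - ηc) * Complex.sinh (lam j + lam k))
      = DeltaM N (lam j) *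
        ∏ k ∈ Finset.univ.erase j,
          (Complex.sinh (lam j - lam k + ηc) * Complex.sinh (lam j + lam k + 2 * ηc))
/-- The Bethe-ansatz transfer-matrix eigenvalue `τ^(N)(u; λ₁,…,λ_m)`. -/
def tauF (N m : ℕ) (lam : Fin m → ℂ) (u : ℂ) : ℂ :=
  Complex.sinh (2 * u - ηc) * Complex.sinh (u - ηc) * DeltaP N u
      / Complex.sinh (2 * u + ηc) *
      ∏ j, (Complex.sinh (u - lam j - ηc) * Complex.sinh (u + lam j)) /
        (Complex.sinh (u - lam j) * Complex.sinh (u + lam j + ηc))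
    - Complex.sinh (u - ηc) * DeltaM N u / Complex.sinh (2 * u + ηc) *
      ∏ j, (Complex.sinh (u - lam j + ηc) * Complex.sinh (u + lam j - ηc)) /
        (Complex.sinh (u - lam j) * Complex.sinh (u + lam j + ηc))

/-!
At `η = 2πi/3` we have `3η = 2πi`, so `sinh(u - 2η) = sinh(u + η)` and
`sinh(u + 2η) = sinh(u - η)`. Hence the Bethe root `λ = η` contributes the factors
`(a(u)/d(u))²` and `(b(u)/d(u))²` to the two products of `τ`, while passing from
`N - 1` to `N` sites multiplies `Δ₊` by `a(u)²` and `Δ₋` by `b(u)²`: both terms of `τ^(N)`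
agree with those of `d(u)² τ^(N-1)(·; λ, η)`.
-/

lemma three_mul_ηc : 3 * ηc = 2 * Real.pi * I := by
  unfold ηc; ring

lemma sinh_add_three_mul_ηc (z : ℂ) : sinh (z + 3 * ηc) = sinh z := by
  rw [three_mul_ηc]; exact sinh_periodic z

lemma sinh_sub_ηc_sub_ηc (u : ℂ) : sinh (u - ηc - ηc) = sinh (u + ηc) := by
  rw [← sinh_add_three_mul_ηc (u - ηc - ηc)]; ring_nf

lemma sinh_add_ηc_add_ηc (u : ℂ) : sinh (u + ηc + ηc) = sinh (u - ηc) := by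
  rw [← sinh_add_three_mul_ηc (u - ηc)]; ring_nf

lemma sinh_ηc_ne_zero : sinh ηc ≠ 0 := by
  have hη : ηc = ((2 * Real.pi / 3 : ℝ) : ℂ) * I := by unfold ηc; push_cast; ring
  have hsin : 0 < Real.sin (2 * Real.pi / 3) :=
    Real.sin_pos_of_pos_of_lt_pi (by positivity) (by linarith [Real.pi_pos])
  rw [hη, sinh_mul_I, ← ofReal_sin]
  exact mul_ne_zero (ofReal_ne_zero.mpr hsin.ne') I_ne_zero

lemma DeltaP_succ (N : ℕ) (u : ℂ) : DeltaP (N + 1) u = aF u ^ 2 * DeltaP N u := by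
  simp only [DeltaP]; ring

lemma DeltaM_succ (N : ℕ) (u : ℂ) : DeltaM (N + 1) u = bF u ^ 2 * DeltaM N u := by
  simp only [DeltaM]; ring

lemma sinh_ratio_plus_at_ηc {u : ℂ} (hu : sinh (u - ηc) ≠ 0) :
    sinh (u - ηc - ηc) * sinh (u + ηc) / (sinh (u - ηc) * sinh (u + ηc + ηc)) =
      aF u ^ 2 / dF u ^ 2 := by
  have := sinh_ηc_ne_zero
  rw [sinh_sub_ηc_sub_ηc, sinh_add_ηc_add_ηc, aF, dF]
  field_simp

lemma sinh_ratio_minus_at_ηc {u : ℂ} (hu : sinh (u - ηc) ≠ 0) :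
    sinh (u - ηc + ηc) * sinh (u + ηc - ηc) / (sinh (u - ηc) * sinh (u + ηc + ηc)) =
      bF u ^ 2 / dF u ^ 2 := by
  have := sinh_ηc_ne_zero
  rw [sub_add_cancel, add_sub_cancel_right, sinh_add_ηc_add_ηc, bF, dF]
  field_simp

lemma dF_sq_mul_tauF_snoc_ηc (N m : ℕ) (lam : Fin m → ℂ) {u : ℂ} (hu : sinh (u - ηc) ≠ 0) :
    dF u ^ 2 * tauF N (m + 1) (Fin.snoc lam ηc) u = tauF (N + 1) m lam u := by
  have hd : dF u ≠ 0 := div_ne_zero hu sinh_ηc_ne_zero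
  simp only [tauF, Fin.prod_univ_castSucc, Fin.snoc_castSucc, Fin.snoc_last,
    sinh_ratio_plus_at_ηc hu, sinh_ratio_minus_at_ηc hu, DeltaP_succ, DeltaM_succ]
  field_simp

theorem tau_eigenvalue_pairing_general (N m : ℕ) (hN : 2 ≤ N) (lam : Fin m → ℂ) (u : ℂ)
    (h2 : Complex.sinh (u - ηc) ≠ 0) :
    tauF N m lam u = dF u ^ 2 * tauF (N - 1) (m + 1) (Fin.snoc lam ηc) u := by
  obtain ⟨n, rfl⟩ : ∃ n, N = n + 1 := ⟨N - 1, by omega⟩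
  exact (dF_sq_mul_tauF_snoc_ηc n m lam h2).symm

/-- transfer-matrix eigenvalue pairing: for every `N ≥ 2`, `m ≥ 0`,
`λ₁,…,λ_m ∈ ℂ` and every `u ∈ ℂ` with `sinh(2u+η) ≠ 0`, `sinh(u-η) ≠ 0`,
`sinh(u+2η) ≠ 0` and `sinh(u-λⱼ) ≠ 0`, `sinh(u+λⱼ+η) ≠ 0` for all `j`:
`τ^(N)(u; λ₁,…,λ_m) = d(u)² τ^(N-1)(u; λ₁,…,λ_m, η)`. -/
theorem tau_eigenvalue_pairing (N m : ℕ) (hN : 2 ≤ N) (lam : Fin m → ℂ) (u : ℂ)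
    (h1 : Complex.sinh (2 * u + ηc) ≠ 0) (h2 : Complex.sinh (u - ηc) ≠ 0)
    (h3 : Complex.sinh (u + 2 * ηc) ≠ 0)
    (h4 : ∀ j, Complex.sinh (u - lam j) ≠ 0)
    (h5 : ∀ j, Complex.sinh (u + lam j + ηc) ≠ 0) :
    tauF N m lam u = dF u ^ 2 * tauF (N - 1) (m + 1) (Fin.snoc lam ηc) u :=
  tau_eigenvalue_pairing_general N m hN lam u h2
end
end
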